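/- Let L ≥ 1 be a natural number, U ∈ (0, π/4), and Δ₄, Δ₅ positive reals with Δ₄ ≠ Δ₅. Let a₁, a₂, a₃ ∈ (πL, πL+U), and for each i ∈ {1,2,3} let Nᵢ, Qᵢ, Aᵢ, Bᵢ, Pᵢ⁴, Pᵢ⁵ be positive reals such that: (i) a₁·sin²(a₁)·(N₁/Q₁) = E₁(L,U), a₂·cos²(a₂)·(N₂/Q₂) = E₂(L,U), a₃·cos(2a₃)·(N₃/Q₃) = E₃(L,U); and (ii) (1+Δ₄)^{1/Δ₄} · Aᵢ · (Pᵢ⁴/Qᵢ)^{1/Δ₄} = (1+Δ₅)^{1/Δ₅} · Bᵢ · (Pᵢ⁵/Qᵢ)^{1/Δ₅} for each i. Then the secondary exact complete hybrid formula holds: a₂ · N₂ · (P₂⁵)^{Δ₄/(Δ₅−Δ₄)} · (P₂⁴)^{−Δ₅/(Δ₅−Δ₄)} · (A₂/B₂)^{−Δ₄Δ₅/(Δ₅−Δ₄)} · cos²(a₂) − a₁ · N₁ · (P₁⁵)^{Δ₄/(Δ₅−Δ₄)} · (P₁⁴)^{−Δ₅/(Δ₅−Δ₄)} · (A₁/B₁)^{−Δ₄Δ₅/(Δ₅−Δ₄)}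 · sin²(a₁) = a₃ · N₃ · (P₃⁵)^{Δ₄/(Δ₅−Δ₄)} · (P₃⁴)^{−Δ₅/(Δ₅−Δ₄)} · (A₃/B₃)^{−Δ₄Δ₅/(Δ₅−Δ₄)} · cos(2a₃). -/

import Mathlib

/-!
Taking logarithms turns each hybrid formula (ii) into a linear relation between the logarithms
of `Aᵢ, Bᵢ, Pᵢ⁴, Pᵢ⁵, Qᵢ`; solving it gives
`(Pᵢ⁵)^{Δ₄/(Δ₅−Δ₄)} (Pᵢ⁴)^{−Δ₅/(Δ₅−Δ₄)} (Aᵢ/Bᵢ)^{−Δ₄Δ₅/(Δ₅−Δ₄)} = C / Qᵢ` with `C` depending on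
`Δ₄, Δ₅` only. Hence the `i`-th term of the claim is `C` times the left side of the factorization
formula (i), that is `C · Eᵢ`, and the claim reduces to the identity `E₂ − E₁ = E₃`.
-/

open Real

noncomputable def E₁ (L : ℕ) (U : ℝ) : ℝ :=
  (2 * Real.pi * L + U) / 4
    - (1 / 2) * (Real.pi * L + U) * (Real.sin (2 * U) / (2 * U))
    + (1 / 4) * (Real.sin U ^ 2 / U)

noncomputable def E₂ (L : ℕ) (U : ℝ) : ℝ :=
  (2 * Real.pi * L + U) / 4
    + (1 / 2) * (Real.pi * L + U) * (Real.sin (2 * U) / (2 * U))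
    - (1 / 4) * (Real.sin U ^ 2 / U)

noncomputable def E₃ (L : ℕ) (U : ℝ) : ℝ :=
  (Real.pi * L + U) * (Real.sin (2 * U) / (2 * U))
    - (1 / 2) * (Real.sin U ^ 2 / U)

theorem E₂_sub_E₁ (L : ℕ) (U : ℝ) : E₂ L U - E₁ L U = E₃ L U := by
  unfold E₁ E₂ E₃
  ring

theorem log_hybrid_side {Δ A P Q : ℝ} (hΔ : 0 < 1 + Δ) (hA : 0 < A) (hP : 0 < P) (hQ : 0 < Q) :
    log ((1 + Δ) ^ (1 / Δ) * A * (P / Q) ^ (1 / Δ)) = (log (1 + Δ) + log P - log Q) / Δ + log A := by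
  rw [log_mul (by positivity) (by positivity), log_mul (by positivity) hA.ne',
    log_rpow hΔ, log_rpow (by positivity), log_div hP.ne' hQ.ne']
  ring

theorem hybrid_factor_eq_div {Δ₄ Δ₅ Q A B P4 P5 : ℝ}
    (h4 : 0 < 1 + Δ₄) (h5 : 0 < 1 + Δ₅) (hΔ₄ : Δ₄ ≠ 0) (hΔ₅ : Δ₅ ≠ 0) (hne : Δ₄ ≠ Δ₅)
    (hQ : 0 < Q) (hA : 0 < A) (hB : 0 < B) (hP4 : 0 < P4) (hP5 : 0 < P5)
    (g : (1 + Δ₄) ^ (1 / Δ₄) * A * (P4 / Q) ^ (1 / Δ₄)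
        = (1 + Δ₅) ^ (1 / Δ₅) * B * (P5 / Q) ^ (1 / Δ₅)) :
    P5 ^ (Δ₄ / (Δ₅ - Δ₄)) * P4 ^ (-(Δ₅ / (Δ₅ - Δ₄))) * (A / B) ^ (-(Δ₄ * Δ₅ / (Δ₅ - Δ₄)))
      = (1 + Δ₄) ^ (Δ₅ / (Δ₅ - Δ₄)) * (1 + Δ₅) ^ (-(Δ₄ / (Δ₅ - Δ₄))) / Q := by
  have hd : Δ₅ - Δ₄ ≠ 0 := sub_ne_zero.2 hne.symm
  have hlog := congrArg log g
  rw [log_hybrid_side h4 hA hP4 hQ, log_hybrid_side h5 hB hP5 hQ] at hlog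
  field_simp at hlog
  apply log_injOn_pos (Set.mem_Ioi.2 (by positivity)) (Set.mem_Ioi.2 (by positivity))
  rw [log_mul (by positivity) (by positivity), log_mul (by positivity) (by positivity),
    log_div (by positivity) hQ.ne', log_mul (by positivity) (by positivity),
    log_rpow hP5, log_rpow hP4, log_rpow (by positivity), log_rpow h4, log_rpow h5,
    log_div hA.ne' hB.ne']
  field_simp
  linear_combination -hlog

theorem secondary_exact_complete_hybrid_formula_general
    (L : ℕ) (U : ℝ)
    (Δ₄ Δ₅ : ℝ) (hΔ₄ : 0 < Δ₄) (hΔ₅ : 0 < Δ₅) (hne : Δ₄ ≠ Δ₅)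
    (a₁ a₂ a₃ : ℝ)
    (N₁ N₂ N₃ Q₁ Q₂ Q₃ A₁ A₂ A₃ B₁ B₂ B₃ P₁4 P₂4 P₃4 P₁5 P₂5 P₃5 : ℝ)
    (hQ₁ : 0 < Q₁) (hQ₂ : 0 < Q₂) (hQ₃ : 0 < Q₃)
    (hA₁ : 0 < A₁) (hA₂ : 0 < A₂) (hA₃ : 0 < A₃)
    (hB₁ : 0 < B₁) (hB₂ : 0 < B₂) (hB₃ : 0 < B₃)
    (hP₁4 : 0 < P₁4) (hP₂4 : 0 < P₂4) (hP₃4 : 0 < P₃4)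
    (hP₁5 : 0 < P₁5) (hP₂5 : 0 < P₂5) (hP₃5 : 0 < P₃5)
    (h₁ : a₁ * Real.sin a₁ ^ 2 * (N₁ / Q₁) = E₁ L U)
    (h₂ : a₂ * Real.cos a₂ ^ 2 * (N₂ / Q₂) = E₂ L U)
    (h₃ : a₃ * Real.cos (2 * a₃) * (N₃ / Q₃) = E₃ L U)
    (g₁ : (1 + Δ₄) ^ (1 / Δ₄) * A₁ * (P₁4 / Q₁) ^ (1 / Δ₄)
        = (1 + Δ₅) ^ (1 / Δ₅) * B₁ * (P₁5 / Q₁) ^ (1 / Δ₅))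
    (g₂ : (1 + Δ₄) ^ (1 / Δ₄) * A₂ * (P₂4 / Q₂) ^ (1 / Δ₄)
        = (1 + Δ₅) ^ (1 / Δ₅) * B₂ * (P₂5 / Q₂) ^ (1 / Δ₅))
    (g₃ : (1 + Δ₄) ^ (1 / Δ₄) * A₃ * (P₃4 / Q₃) ^ (1 / Δ₄)
        = (1 + Δ₅) ^ (1 / Δ₅) * B₃ * (P₃5 / Q₃) ^ (1 / Δ₅)) :
    a₂ * N₂ * P₂5 ^ (Δ₄ / (Δ₅ - Δ₄)) * P₂4 ^ (-(Δ₅ / (Δ₅ - Δ₄)))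
        * (A₂ / B₂) ^ (-(Δ₄ * Δ₅ / (Δ₅ - Δ₄))) * Real.cos a₂ ^ 2
      - a₁ * N₁ * P₁5 ^ (Δ₄ / (Δ₅ - Δ₄)) * P₁4 ^ (-(Δ₅ / (Δ₅ - Δ₄)))
        * (A₁ / B₁) ^ (-(Δ₄ * Δ₅ / (Δ₅ - Δ₄))) * Real.sin a₁ ^ 2
      = a₃ * N₃ * P₃5 ^ (Δ₄ / (Δ₅ - Δ₄)) * P₃4 ^ (-(Δ₅ / (Δ₅ - Δ₄)))
        * (A₃ / B₃) ^ (-(Δ₄ * Δ₅ / (Δ₅ - Δ₄))) * Real.cos (2 * a₃) := by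
  have h4 : 0 < 1 + Δ₄ := by linarith
  have h5 : 0 < 1 + Δ₅ := by linarith
  have e₁ := hybrid_factor_eq_div h4 h5 hΔ₄.ne' hΔ₅.ne' hne hQ₁ hA₁ hB₁ hP₁4 hP₁5 g₁
  have e₂ := hybrid_factor_eq_div h4 h5 hΔ₄.ne' hΔ₅.ne' hne hQ₂ hA₂ hB₂ hP₂4 hP₂5 g₂
  have e₃ := hybrid_factor_eq_div h4 h5 hΔ₄.ne' hΔ₅.ne' hne hQ₃ hA₃ hB₃ hP₃4 hP₃5 g₃
  set C := (1 + Δ₄) ^ (Δ₅ / (Δ₅ - Δ₄)) * (1 + Δ₅) ^ (-(Δ₄ / (Δ₅ - Δ₄)))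
  linear_combination (a₂ * N₂ * cos a₂ ^ 2) * e₂ - (a₁ * N₁ * sin a₁ ^ 2) * e₁
    - (a₃ * N₃ * cos (2 * a₃)) * e₃ + C * (h₂ - h₁ - h₃ + E₂_sub_E₁ L U)

theorem secondary_exact_complete_hybrid_formula
    (L : ℕ) (hL : 1 ≤ L) (U : ℝ) (hU : 0 < U) (hU' : U < π / 4)
    (Δ₄ Δ₅ : ℝ) (hΔ₄ : 0 < Δ₄) (hΔ₅ : 0 < Δ₅) (hne : Δ₄ ≠ Δ₅)
    (a₁ a₂ a₃ : ℝ)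
    (ha₁ : a₁ ∈ Set.Ioo (π * L) (π * L + U))
    (ha₂ : a₂ ∈ Set.Ioo (π * L) (π * L + U))
    (ha₃ : a₃ ∈ Set.Ioo (π * L) (π * L + U))
    (N₁ N₂ N₃ Q₁ Q₂ Q₃ A₁ A₂ A₃ B₁ B₂ B₃ P₁4 P₂4 P₃4 P₁5 P₂5 P₃5 : ℝ)
    (hN₁ : 0 < N₁) (hN₂ : 0 < N₂) (hN₃ : 0 < N₃)
    (hQ₁ : 0 < Q₁) (hQ₂ : 0 < Q₂) (hQ₃ : 0 < Q₃)
    (hA₁ : 0 < A₁) (hA₂ : 0 < A₂) (hA₃ : 0 < A₃)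
    (hB₁ : 0 < B₁) (hB₂ : 0 < B₂) (hB₃ : 0 < B₃)
    (hP₁4 : 0 < P₁4) (hP₂4 : 0 < P₂4) (hP₃4 : 0 < P₃4)
    (hP₁5 : 0 < P₁5) (hP₂5 : 0 < P₂5) (hP₃5 : 0 < P₃5)
    (h₁ : a₁ * Real.sin a₁ ^ 2 * (N₁ / Q₁) = E₁ L U)
    (h₂ : a₂ * Real.cos a₂ ^ 2 * (N₂ / Q₂) = E₂ L U)
    (h₃ : a₃ * Real.cos (2 * a₃) * (N₃ / Q₃) = E₃ L U)
    (g₁ : (1 + Δ₄) ^ (1 / Δ₄) * A₁ * (P₁4 / Q₁) ^ (1 / Δ₄)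
        = (1 + Δ₅) ^ (1 / Δ₅) * B₁ * (P₁5 / Q₁) ^ (1 / Δ₅))
    (g₂ : (1 + Δ₄) ^ (1 / Δ₄) * A₂ * (P₂4 / Q₂) ^ (1 / Δ₄)
        = (1 + Δ₅) ^ (1 / Δ₅) * B₂ * (P₂5 / Q₂) ^ (1 / Δ₅))
    (g₃ : (1 + Δ₄) ^ (1 / Δ₄) * A₃ * (P₃4 / Q₃) ^ (1 / Δ₄)
        = (1 + Δ₅) ^ (1 / Δ₅) * B₃ * (P₃5 / Q₃) ^ (1 / Δ₅)) :
    a₂ * N₂ * P₂5 ^ (Δ₄ / (Δ₅ - Δ₄)) * P₂4 ^ (-(Δ₅ / (Δ₅ - Δ₄)))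
        * (A₂ / B₂) ^ (-(Δ₄ * Δ₅ / (Δ₅ - Δ₄))) * Real.cos a₂ ^ 2
      - a₁ * N₁ * P₁5 ^ (Δ₄ / (Δ₅ - Δ₄)) * P₁4 ^ (-(Δ₅ / (Δ₅ - Δ₄)))
        * (A₁ / B₁) ^ (-(Δ₄ * Δ₅ / (Δ₅ - Δ₄))) * Real.sin a₁ ^ 2
      = a₃ * N₃ * P₃5 ^ (Δ₄ / (Δ₅ - Δ₄)) * P₃4 ^ (-(Δ₅ / (Δ₅ - Δ₄)))
        * (A₃ / B₃) ^ (-(Δ₄ * Δ₅ / (Δ₅ - Δ₄))) * Real.cos (2 * a₃) :=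
  secondary_exact_complete_hybrid_formula_general L U Δ₄ Δ₅ hΔ₄ hΔ₅ hne a₁ a₂ a₃ N₁ N₂ N₃ Q₁ Q₂ Q₃
    A₁ A₂ A₃ B₁ B₂ B₃ P₁4 P₂4 P₃4 P₁5 P₂5 P₃5 hQ₁ hQ₂ hQ₃ hA₁ hA₂ hA₃ hB₁ hB₂ hB₃ hP₁4 hP₂4 hP₃4
    hP₁5 hP₂5 hP₃5 h₁ h₂ h₃ g₁ g₂ g₃
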